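/- arXiv:2401.03956 — 5 statements merged into one kernel-verified Lean document; each statement's English description precedes it below -/
import Mathlib

section
/- (Kolmogorov–Weierstrass theorem) Assume every f ∈ C([0,1]^d) admits a representation f(x) = Σ_{q=0}^{2d} g_f(Σ_{i=1}^d λ_i φ_q(x_i)) with g_f ∈ C([0,d]), where λ_i ∈ (0,1] and φ_q : [0,1] → [0,1] are continuous (Kolmogorov superposition theorem). Then the linear span of the Kolmogorov monomials Kp_n(x) := Σ_{q=0}^{2d} (Σ_{i=1}^d λ_i φ_q(x_i))^n, n ≥ 0, is dense in C([0,1]^d) with respect to the uniform norm. -/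
/-!
Given `f`, take its outer function `g` from the superposition theorem and a Weierstrass polynomial
`p` within `ε / (2d + 2)` of `g` on `[0, d]`, which contains every inner sum
`∑ i, λ i * φ q (x i)`. Replacing `g` by `p` in each of the `2d + 1` terms costs at most `ε`
in total, and `∑ q, p (∑ i, λ i * φ q (x i))` is the combination of Kolmogorov monomials with
the coefficients of `p`.
-/

open Polynomial Set

theorem Polynomial.sum_range_coeff_mul_sum_pow {R ι : Type*} [CommSemiring R] (p : R[X])
    (s : Finset ι) (t : ι → R) :
    ∑ m ∈ Finset.range (p.natDegree + 1), p.coeff m * ∑ q ∈ s, t q ^ m = ∑ q ∈ s, p.eval (t q) := by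
  simp_rw [eval_eq_sum_range, Finset.mul_sum]
  exact Finset.sum_comm

theorem Finset.abs_sum_sub_sum_le_card_nsmul {ι α : Type*} [AddCommGroup α] [LinearOrder α]
    [IsOrderedAddMonoid α] (s : Finset ι) (u v : ι → α) {δ : α}
    (h : ∀ i ∈ s, |u i - v i| ≤ δ) : |∑ i ∈ s, u i - ∑ i ∈ s, v i| ≤ s.card • δ := by
  rw [← Finset.sum_sub_distrib]
  exact (Finset.abs_sum_le_sum_abs _ _).trans (Finset.sum_le_card_nsmul _ _ _ h)

theorem sum_mul_mem_Icc_zero_card {ι : Type*} [Fintype ι] {a b : ι → ℝ}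
    (ha : ∀ i, a i ∈ Icc 0 1) (hb : ∀ i, b i ∈ Icc 0 1) :
    ∑ i, a i * b i ∈ Icc 0 (Fintype.card ι : ℝ) := by
  have hab : ∀ i, a i * b i ∈ Icc (0 : ℝ) 1 := fun i => unitInterval.mul_mem (ha i) (hb i)
  refine ⟨Finset.sum_nonneg fun i _ => (hab i).1, ?_⟩
  simpa using Finset.sum_le_card_nsmul Finset.univ _ _ fun i _ => (hab i).2

theorem exists_polynomial_near_sum_comp {X ι : Type*} [Fintype ι] {S : Set X} {a b : ℝ}
    {g : ℝ → ℝ} (hg : ContinuousOn g (Icc a b)) (t : ι → X → ℝ)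
    (ht : ∀ q, MapsTo (t q) S (Icc a b)) {ε : ℝ} (hε : 0 < ε) :
    ∃ p : ℝ[X], ∀ x ∈ S, |∑ q, g (t q x) - ∑ q, p.eval (t q x)| ≤ ε := by
  set n : ℝ := (Fintype.card ι : ℝ)
  obtain ⟨p, hp⟩ := exists_polynomial_near_of_continuousOn a b g hg (ε / (n + 1)) (by positivity)
  refine ⟨p, fun x hx => ?_⟩
  calc |∑ q, g (t q x) - ∑ q, p.eval (t q x)|
      ≤ n * (ε / (n + 1)) := by
        rw [← nsmul_eq_mul]
        exact Finset.abs_sum_sub_sum_le_card_nsmul _ _ _ fun q _ =>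
          (abs_sub_comm _ _).trans_le (hp _ (ht q hx)).le
    _ ≤ (n + 1) * (ε / (n + 1)) := by gcongr; linarith
    _ = ε := mul_div_cancel₀ _ (by positivity)

theorem kolmogorov_weierstrass_general (d : ℕ)
    (lam : Fin d → ℝ) (hlam : ∀ i, 0 < lam i ∧ lam i ≤ 1)
    (φ : Fin (2*d+1) → ℝ → ℝ)
    (hφmap : ∀ q, Set.MapsTo (φ q) (Set.Icc (0:ℝ) 1) (Set.Icc (0:ℝ) 1))
    (KST : ∀ f : (Fin d → ℝ) → ℝ, ContinuousOn f (Set.Icc 0 1) →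
      ∃ g : ℝ → ℝ, ContinuousOn g (Set.Icc (0:ℝ) (d:ℝ)) ∧
        ∀ x ∈ Set.Icc (0 : Fin d → ℝ) 1,
          f x = ∑ q : Fin (2*d+1), g (∑ i, lam i * φ q (x i))) :
    ∀ f : (Fin d → ℝ) → ℝ, ContinuousOn f (Set.Icc 0 1) → ∀ ε > (0:ℝ),
      ∃ (N : ℕ) (c : ℕ → ℝ), ∀ x ∈ Set.Icc (0 : Fin d → ℝ) 1,
        |f x - ∑ m ∈ Finset.range N, c m *
          ∑ q : Fin (2*d+1), (∑ i, lam i * φ q (x i)) ^ m| ≤ ε := by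
  intro f hf ε hε
  obtain ⟨g, hg, hrep⟩ := KST f hf
  have hinner : ∀ q, MapsTo (fun x : Fin d → ℝ => ∑ i, lam i * φ q (x i)) (Icc 0 1) (Icc 0 d) :=
    fun q x hx => by
      simpa using sum_mul_mem_Icc_zero_card (fun i => ⟨(hlam i).1.le, (hlam i).2⟩)
        (fun i => hφmap q ⟨hx.1 i, hx.2 i⟩)
  obtain ⟨p, hp⟩ := exists_polynomial_near_sum_comp hg _ hinner hε
  refine ⟨p.natDegree + 1, p.coeff, fun x hx => ?_⟩
  rw [hrep x hx, sum_range_coeff_mul_sum_pow]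
  exact hp x hx

/-- Kolmogorov–Weierstrass: assuming the Kolmogorov superposition theorem,
the span of the Kolmogorov monomials is dense in C([0,1]^d) in the uniform norm. -/
theorem kolmogorov_weierstrass (d : ℕ) (hd : 1 ≤ d)
    (lam : Fin d → ℝ) (hlam : ∀ i, 0 < lam i ∧ lam i ≤ 1)
    (φ : Fin (2*d+1) → ℝ → ℝ)
    (hφc : ∀ q, ContinuousOn (φ q) (Set.Icc (0:ℝ) 1))
    (hφmap : ∀ q, Set.MapsTo (φ q) (Set.Icc (0:ℝ) 1) (Set.Icc (0:ℝ) 1))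
    (KST : ∀ f : (Fin d → ℝ) → ℝ, ContinuousOn f (Set.Icc 0 1) →
      ∃ g : ℝ → ℝ, ContinuousOn g (Set.Icc (0:ℝ) (d:ℝ)) ∧
        ∀ x ∈ Set.Icc (0 : Fin d → ℝ) 1,
          f x = ∑ q : Fin (2*d+1), g (∑ i, lam i * φ q (x i))) :
    ∀ f : (Fin d → ℝ) → ℝ, ContinuousOn f (Set.Icc 0 1) → ∀ ε > (0:ℝ),
      ∃ (N : ℕ) (c : ℕ → ℝ), ∀ x ∈ Set.Icc (0 : Fin d → ℝ) 1,
        |f x - ∑ m ∈ Finset.range N, c m *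
          ∑ q : Fin (2*d+1), (∑ i, lam i * φ q (x i)) ^ m| ≤ ε :=
  kolmogorov_weierstrass_general d lam hlam φ hφmap KST
end

section
/- Let B_n f(x) := Σ_{i=0}^n f(i/n) C(n,i) x^i (1−x)^{n−i} be the Bernstein polynomial of f ∈ C²([0,1]). Then ‖f − B_n f‖_∞ ≤ (1/(8n)) ‖f''‖_∞. -/
/-! Bernstein operators reproduce affine functions, so
`f x - B_n f x = -∑ ν, w_ν x * (f (ν/n) - f x - f' x * (ν/n - x))` with nonnegative weights `w_ν`.
Taylor's bound `|f t - f x - f' x * (t - x)| ≤ M/2 * (t - x)^2` and the variance identity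
`∑ ν, w_ν x * (ν/n - x)^2 = x * (1 - x) / n ≤ 1 / (4n)` then give the error `M / (8n)`. -/

open Finset Polynomial Set

namespace bernsteinPolynomial

variable {R : Type*} [CommRing R]

theorem eval_eq (n ν : ℕ) (x : R) :
    (bernsteinPolynomial R n ν).eval x = n.choose ν * x ^ ν * (1 - x) ^ (n - ν) := by
  simp [bernsteinPolynomial]

theorem sum_eval (n : ℕ) (x : R) :
    ∑ ν ∈ range (n + 1), (bernsteinPolynomial R n ν).eval x = 1 := by
  simpa [eval_finsetSum] using congr_arg (eval x) (sum R n)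

theorem sum_natCast_mul_eval (n : ℕ) (x : R) :
    ∑ ν ∈ range (n + 1), (ν : R) * (bernsteinPolynomial R n ν).eval x = n * x := by
  simpa [eval_finsetSum] using congr_arg (eval x) (sum_smul R n)

theorem sum_sub_sq_mul_eval (n : ℕ) (x : R) :
    ∑ ν ∈ range (n + 1), (n * x - ν) ^ 2 * (bernsteinPolynomial R n ν).eval x
      = n * x * (1 - x) := by
  simpa [eval_finsetSum] using congr_arg (eval x) (variance R n)

variable {K : Type*} [Field K] [CharZero K] {n : ℕ}

theorem sum_div_sub_mul_eval (hn : n ≠ 0) (x : K) :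
    ∑ ν ∈ range (n + 1), (ν / n - x) * (bernsteinPolynomial K n ν).eval x = 0 := by
  have hn' : (n : K) ≠ 0 := Nat.cast_ne_zero.2 hn
  simp only [sub_mul, sum_sub_distrib, div_mul_eq_mul_div, ← sum_div, ← mul_sum,
    sum_natCast_mul_eval, sum_eval]
  field_simp
  ring

theorem sum_div_sub_sq_mul_eval (hn : n ≠ 0) (x : K) :
    ∑ ν ∈ range (n + 1), (ν / n - x) ^ 2 * (bernsteinPolynomial K n ν).eval x
      = x * (1 - x) / n := by
  have hn' : (n : K) ≠ 0 := Nat.cast_ne_zero.2 hn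
  have hsq : ∀ ν : ℕ, ((ν : K) / n - x) ^ 2 = (n * x - ν) ^ 2 / n ^ 2 := fun ν => by
    field_simp; ring
  simp only [hsq, div_mul_eq_mul_div, ← sum_div, sum_sub_sq_mul_eval]
  field_simp

theorem abs_sub_sum_mul_eval_le (hn : n ≠ 0) {f : ℝ → ℝ} {x c C : ℝ} (hx : x ∈ Icc (0 : ℝ) 1)
    (hf : ∀ ν ≤ n, |f (ν / n) - f x - c * (ν / n - x)| ≤ C * (ν / n - x) ^ 2) :
    |f x - ∑ ν ∈ range (n + 1), f (ν / n) * (bernsteinPolynomial ℝ n ν).eval x|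
      ≤ C * (x * (1 - x) / n) := by
  set w : ℕ → ℝ := fun ν => (bernsteinPolynomial ℝ n ν).eval x
  have hw : ∀ ν, 0 ≤ w ν := fun ν => by
    have := hx.1
    have := sub_nonneg.2 hx.2
    simp only [w, eval_eq]
    positivity
  have hexpand : ∑ ν ∈ range (n + 1), w ν * (f (ν / n) - f x - c * (ν / n - x))
      = ∑ ν ∈ range (n + 1), f (ν / n) * w ν - f x := by
    have h : ∑ ν ∈ range (n + 1), w ν * (f (ν / n) - f x - c * (ν / n - x))
        = ∑ ν ∈ range (n + 1), f (ν / n) * w ν - f x * ∑ ν ∈ range (n + 1), w ν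
          - c * ∑ ν ∈ range (n + 1), (ν / n - x) * w ν := by
      rw [mul_sum, mul_sum, ← sum_sub_distrib, ← sum_sub_distrib]
      exact sum_congr rfl fun _ _ => by ring
    rwa [sum_eval, sum_div_sub_mul_eval hn, mul_one, mul_zero, sub_zero] at h
  calc |f x - ∑ ν ∈ range (n + 1), f (ν / n) * w ν|
      = |∑ ν ∈ range (n + 1), w ν * (f (ν / n) - f x - c * (ν / n - x))| := by
        rw [hexpand, abs_sub_comm]
    _ ≤ ∑ ν ∈ range (n + 1), w ν * (C * (ν / n - x) ^ 2) := by
        refine (abs_sum_le_sum_abs _ _).trans (sum_le_sum fun ν hν => ?_)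
        rw [abs_mul, abs_of_nonneg (hw ν)]
        exact mul_le_mul_of_nonneg_left (hf ν (Nat.lt_succ_iff.1 (mem_range.1 hν))) (hw ν)
    _ = C * (x * (1 - x) / n) := by
        rw [← sum_div_sub_sq_mul_eval hn x, mul_sum]
        exact sum_congr rfl fun _ _ => by ring

end bernsteinPolynomial

theorem Convex.abs_sub_sub_mul_le_of_abs_deriv_sub_le {s : Set ℝ} (hs : Convex ℝ s)
    {f f' : ℝ → ℝ} {M a b : ℝ} (hf : ∀ x ∈ s, HasDerivAt f (f' x) x)
    (hf' : ∀ x ∈ s, |f' x - f' a| ≤ M * |x - a|) (ha : a ∈ s) (hb : b ∈ s) :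
    |f b - f a - f' a * (b - a)| ≤ M / 2 * (b - a) ^ 2 := by
  set p : ℝ → ℝ := fun t => a + t * (b - a) with hp_def
  set g : ℝ → ℝ := fun t => f (p t) - f a - f' a * (p t - a) with hg_def
  have hp : ∀ t ∈ Icc (0 : ℝ) 1, p t ∈ s := fun t ht => by
    simpa [hp_def] using hs.add_smul_sub_mem ha hb ht
  have hg : ∀ t ∈ Icc (0 : ℝ) 1, HasDerivAt g ((f' (p t) - f' a) * (b - a)) t := by
    intro t ht
    have hpt : HasDerivAt p (b - a) t := by
      rw [hp_def]; simpa using ((hasDerivAt_id t).mul_const (b - a)).const_add a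
    exact ((((hf _ (hp t ht)).comp t hpt).sub_const (f a)).sub
      ((hpt.sub_const a).const_mul (f' a))).congr_deriv (by ring)
  -- `g t` is the Taylor remainder at `a + t * (b - a)`; fence it by `M / 2 * (b - a) ^ 2 * t ^ 2`.
  have bound : ∀ t ∈ Ico (0 : ℝ) 1, ‖(f' (p t) - f' a) * (b - a)‖ ≤ M * (b - a) ^ 2 * t := by
    intro t ht
    have h := hf' _ (hp t (Ico_subset_Icc_self ht))
    rw [Real.norm_eq_abs, abs_mul]
    calc |f' (p t) - f' a| * |b - a| ≤ M * |p t - a| * |b - a| := by gcongr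
      _ = M * (b - a) ^ 2 * t := by
        rw [hp_def, add_sub_cancel_left, abs_mul, abs_of_nonneg ht.1, ← sq_abs (b - a)]; ring
  have := image_norm_le_of_norm_deriv_right_le_deriv_boundary (a := 0) (b := 1) (f := g)
    (B := fun t => M / 2 * (b - a) ^ 2 * t ^ 2) (B' := fun t => M * (b - a) ^ 2 * t)
    (fun t ht => (hg t ht).continuousAt.continuousWithinAt)
    (fun t ht => (hg t (Ico_subset_Icc_self ht)).hasDerivWithinAt)
    (by simp [hg_def, hp_def])
    (fun t => ((hasDerivAt_pow 2 t).const_mul (M / 2 * (b - a) ^ 2)).congr_deriv (by norm_num; ring))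
    bound (right_mem_Icc.2 zero_le_one)
  simpa [hg_def, hp_def] using this

theorem Convex.abs_sub_sub_mul_le_of_abs_deriv2_le {s : Set ℝ} (hs : Convex ℝ s)
    {f f' f'' : ℝ → ℝ} {M a b : ℝ} (hf : ∀ x ∈ s, HasDerivAt f (f' x) x)
    (hf' : ∀ x ∈ s, HasDerivWithinAt f' (f'' x) s x) (hM : ∀ x ∈ s, |f'' x| ≤ M)
    (ha : a ∈ s) (hb : b ∈ s) :
    |f b - f a - f' a * (b - a)| ≤ M / 2 * (b - a) ^ 2 :=
  hs.abs_sub_sub_mul_le_of_abs_deriv_sub_le hf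
    (fun _ hx => hs.norm_image_sub_le_of_norm_hasDerivWithin_le hf' hM ha hx) ha hb

theorem bernstein_C2_general (n : ℕ) (hn : 0 < n) (f f' f'' : ℝ → ℝ)
    (hderiv : ∀ x ∈ Set.Icc (0:ℝ) 1, HasDerivAt f (f' x) x)
    (hderiv2 : ∀ x ∈ Set.Icc (0:ℝ) 1, HasDerivAt f' (f'' x) x)
    (M : ℝ) (hM : ∀ x ∈ Set.Icc (0:ℝ) 1, |f'' x| ≤ M) :
    ∀ x ∈ Set.Icc (0:ℝ) 1,
      |f x - ∑ i ∈ Finset.range (n+1),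
        f ((i:ℝ)/n) * (n.choose i : ℝ) * x ^ i * (1 - x) ^ (n - i)|
        ≤ 1/(8*(n:ℝ)) * M := by
  intro x hx
  have htaylor : ∀ ν ≤ n, |f (ν / n) - f x - f' x * (ν / n - x)| ≤ M / 2 * (ν / n - x) ^ 2 :=
    fun ν hν => (convex_Icc 0 1).abs_sub_sub_mul_le_of_abs_deriv2_le hderiv
      (fun y hy => (hderiv2 y hy).hasDerivWithinAt) hM hx
      ⟨by positivity, div_le_one_of_le₀ (by exact_mod_cast hν) n.cast_nonneg⟩
  have hM₀ : 0 ≤ M := (abs_nonneg _).trans (hM x hx)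
  calc _ = |f x - ∑ ν ∈ range (n + 1), f (ν / n) * (bernsteinPolynomial ℝ n ν).eval x| := by
        simp only [bernsteinPolynomial.eval_eq, mul_assoc]
    _ ≤ M / 2 * (x * (1 - x) / n) := bernsteinPolynomial.abs_sub_sum_mul_eval_le hn.ne' hx htaylor
    _ ≤ 1 / (8 * n) * M := by
        have hquarter : x * (1 - x) ≤ 1 / 4 := by nlinarith [sq_nonneg (x - 1 / 2)]
        have hn' : (0 : ℝ) < n := by exact_mod_cast hn
        calc M / 2 * (x * (1 - x) / n) ≤ M / 2 * (1 / 4 / n) := by gcongr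
          _ = 1 / (8 * n) * M := by field_simp; ring

/-- Bernstein polynomial approximation of a C² function: error ≤ ‖f''‖/(8n). -/
theorem bernstein_C2 (n : ℕ) (hn : 0 < n) (f f' f'' : ℝ → ℝ)
    (hderiv : ∀ x ∈ Set.Icc (0:ℝ) 1, HasDerivAt f (f' x) x)
    (hderiv2 : ∀ x ∈ Set.Icc (0:ℝ) 1, HasDerivAt f' (f'' x) x)
    (hf''c : ContinuousOn f'' (Set.Icc (0:ℝ) 1))
    (M : ℝ) (hM : ∀ x ∈ Set.Icc (0:ℝ) 1, |f'' x| ≤ M) :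
    ∀ x ∈ Set.Icc (0:ℝ) 1,
      |f x - ∑ i ∈ Finset.range (n+1),
        f ((i:ℝ)/n) * (n.choose i : ℝ) * x ^ i * (1 - x) ^ (n - i)|
        ≤ 1/(8*(n:ℝ)) * M :=
  bernstein_C2_general n hn f f' f'' hderiv hderiv2 M hM
end

section
/- Let f ∈ C²([0,1]^d) and define the tensor product Bernstein operator B_{n,…,n} f(x_1,…,x_d) := Σ_{i_1=0}^{n} ⋯ Σ_{i_d=0}^{n} f(i_1/n,…,i_d/n) B_{n,i_1}(x_1) ⋯ B_{n,i_d}(x_d), where B_{n,i}(x) = C(n,i) x^i (1−x)^{n−i}. Then ‖f − B_{n,…,n} f‖_∞ ≤ (d/(8n)) |f|_{2,∞}, where |f|_{2,∞} = max_{i_1+⋯+i_d = 2} ‖D_{x_1}^{i_1} ⋯ D_{x_d}^{i_d} f‖_∞. -/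
/-!
The univariate Bernstein operator `B_n` is positive, reproduces affine functions, and has second
moment `∑ (a/n - t)² b_{n,a}(t) = t(1-t)/n ≤ 1/(4n)`. Subtracting the first-order Taylor polynomial
at `t` and bounding the Lagrange remainder by `M/2 · (a/n - t)²` gives `|g - B_n g| ≤ M/(8n)`.

The tensor product operator is `B_n` applied in the first coordinate to the tensor product operator
in the remaining `d - 1` coordinates. Since `B_n` is positive and preserves constants, it does not
increase sup norms, so the errors of the `d` coordinatewise approximations simply add up.
-/

open Finset Polynomial

namespace bernsteinPolynomial

variable {n : ℕ} {t : ℝ}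

theorem eval_nonneg (a : ℕ) (ht : t ∈ Set.Icc (0 : ℝ) 1) :
    0 ≤ (bernsteinPolynomial ℝ n a).eval t := by
  obtain ⟨ht0, ht1⟩ := ht
  have : 0 ≤ 1 - t := sub_nonneg.2 ht1
  simp only [bernsteinPolynomial, eval_mul, eval_natCast, eval_pow, eval_X, eval_sub, eval_one]
  positivity

theorem sum_eval_s13 (n : ℕ) (t : ℝ) :
    ∑ a : Fin (n + 1), (bernsteinPolynomial ℝ n a).eval t = 1 := by
  rw [Fin.sum_univ_eq_sum_range (fun a => (bernsteinPolynomial ℝ n a).eval t)]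
  simpa [eval_finsetSum] using congrArg (eval t) (bernsteinPolynomial.sum ℝ n)

theorem sum_mul_eval (n : ℕ) (t : ℝ) :
    ∑ a : Fin (n + 1), (a : ℝ) * (bernsteinPolynomial ℝ n a).eval t = n * t := by
  rw [Fin.sum_univ_eq_sum_range (fun a => (a : ℝ) * (bernsteinPolynomial ℝ n a).eval t)]
  simpa [eval_finsetSum] using congrArg (eval t) (bernsteinPolynomial.sum_smul ℝ n)

theorem sum_sub_mul_eval (hn : n ≠ 0) (t : ℝ) :
    ∑ a : Fin (n + 1), ((a : ℝ) / n - t) * (bernsteinPolynomial ℝ n a).eval t = 0 := by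
  have hn' : (n : ℝ) ≠ 0 := Nat.cast_ne_zero.2 hn
  simp only [sub_mul, sum_sub_distrib, div_mul_eq_mul_div, ← sum_div, sum_mul_eval, ← mul_sum,
    sum_eval_s13]
  field_simp
  ring

theorem sum_sub_sq_mul_eval_s13 (hn : n ≠ 0) (t : ℝ) :
    ∑ a : Fin (n + 1), ((a : ℝ) / n - t) ^ 2 * (bernsteinPolynomial ℝ n a).eval t
      = t * (1 - t) / n := by
  have hn' : (n : ℝ) ≠ 0 := Nat.cast_ne_zero.2 hn
  have h := congrArg (eval t) (bernsteinPolynomial.variance ℝ n)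
  simp only [eval_finsetSum, eval_mul, eval_pow, eval_sub, eval_X, eval_natCast,
    eval_one, nsmul_eq_mul] at h
  rw [← Fin.sum_univ_eq_sum_range (fun a => ((n : ℝ) * t - a) ^ 2 * _)] at h
  rw [eq_div_iff hn', ← mul_right_inj' hn', ← mul_assoc (n : ℝ) t, ← h, sum_mul, mul_sum]
  refine sum_congr rfl fun a _ => ?_
  field_simp
  ring

end bernsteinPolynomial

section Taylor

variable {g g' g'' : ℝ → ℝ}

theorem exists_taylor_remainder_two_eq (hg : ∀ u, HasDerivAt g (g' u) u)
    (hg' : ∀ u, HasDerivAt g' (g'' u) u) (t s : ℝ) :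
    ∃ ξ ∈ Set.uIcc t s, g s - g t - g' t * (s - t) = g'' ξ / 2 * (s - t) ^ 2 := by
  rcases eq_or_ne t s with rfl | hts
  · exact ⟨t, Set.left_mem_uIcc, by simp⟩
  have hst : (s - t) ^ 2 ≠ 0 := pow_ne_zero _ (sub_ne_zero.2 hts.symm)
  set C := (g s - g t - g' t * (s - t)) / (s - t) ^ 2 with hC
  -- `C` makes `φ` vanish at `t` as well as at `s`; Rolle's theorem then forces `2 * C = g'' ξ`.
  set φ : ℝ → ℝ := fun u => g s - g u - g' u * (s - u) - C * (s - u) ^ 2 with hφ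
  have hφ' : ∀ u, HasDerivAt φ ((2 * C - g'' u) * (s - u)) u := by
    intro u
    have hsub : HasDerivAt (fun u : ℝ => s - u) (-1) u := by
      simpa using (hasDerivAt_id u).const_sub s
    refine ((((hasDerivAt_const u (g s)).sub (hg u)).sub ((hg' u).mul hsub)).sub
      ((hsub.pow 2).const_mul C)).congr_deriv ?_
    push_cast
    ring
  have hφt : φ t = 0 := by
    simp only [hφ, hC]
    field_simp
    simp
  have hφs : φ s = 0 := by simp [hφ]
  have hφ0 : ∀ u, u = t ∨ u = s → φ u = 0 := by
    rintro u (rfl | rfl) <;> assumption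
  obtain ⟨ξ, hξ, hφξ⟩ := exists_hasDerivAt_eq_zero (min_lt_max.2 hts)
    (fun u _ => (hφ' u).continuousAt.continuousWithinAt)
    ((hφ0 _ (min_choice t s)).trans (hφ0 _ (max_choice t s)).symm) (fun u _ => hφ' u)
  have hξs : s - ξ ≠ 0 := by
    rintro h
    rw [sub_eq_zero] at h
    subst h
    simp only [Set.mem_Ioo, min_lt_iff, lt_max_iff, lt_self_iff_false, or_false] at hξ
    exact lt_asymm hξ.1 hξ.2
  refine ⟨ξ, Set.Ioo_subset_Icc_self hξ, ?_⟩
  have h2C : g'' ξ = 2 * C := by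
    linarith [(mul_eq_zero.1 hφξ).resolve_right hξs]
  rw [h2C, hC]
  field_simp

theorem abs_taylor_remainder_two_le (hg : ∀ u, HasDerivAt g (g' u) u)
    (hg' : ∀ u, HasDerivAt g' (g'' u) u) {t s M : ℝ} (hM : ∀ u ∈ Set.uIcc t s, |g'' u| ≤ M) :
    |g s - g t - g' t * (s - t)| ≤ M / 2 * (s - t) ^ 2 := by
  obtain ⟨ξ, hξ, h⟩ := exists_taylor_remainder_two_eq hg hg' t s
  rw [h, abs_mul, abs_div, abs_two, abs_pow, sq_abs]
  gcongr
  exact hM ξ hξ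

end Taylor

noncomputable def bernsteinOperator (n : ℕ) (g : ℝ → ℝ) (t : ℝ) : ℝ :=
  ∑ a : Fin (n + 1), g ((a : ℕ) / n) * (bernsteinPolynomial ℝ n a).eval t

theorem Fin.val_div_mem_Icc {n : ℕ} (a : Fin (n + 1)) : ((a : ℕ) / n : ℝ) ∈ Set.Icc (0 : ℝ) 1 :=
  ⟨by positivity, div_le_one_of_le₀ (by exact_mod_cast a.is_le) n.cast_nonneg⟩

namespace bernsteinOperator

variable {n : ℕ} {t : ℝ}

theorem sub (g h : ℝ → ℝ) (t : ℝ) :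
    bernsteinOperator n g t - bernsteinOperator n h t = bernsteinOperator n (g - h) t := by
  simp only [bernsteinOperator, ← sum_sub_distrib, Pi.sub_apply, sub_mul]

theorem abs_sum_mul_eval_le (c : Fin (n + 1) → ℝ) (ht : t ∈ Set.Icc (0 : ℝ) 1) :
    |∑ a, c a * (bernsteinPolynomial ℝ n a).eval t|
      ≤ ∑ a, |c a| * (bernsteinPolynomial ℝ n a).eval t := by
  refine (abs_sum_le_sum_abs _ _).trans_eq (sum_congr rfl fun a _ => ?_)
  rw [abs_mul, abs_of_nonneg (bernsteinPolynomial.eval_nonneg _ ht)]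

theorem abs_le {g : ℝ → ℝ} {ε : ℝ} (hg : ∀ a : Fin (n + 1), |g ((a : ℕ) / n)| ≤ ε)
    (ht : t ∈ Set.Icc (0 : ℝ) 1) : |bernsteinOperator n g t| ≤ ε :=
  calc |bernsteinOperator n g t|
      ≤ ∑ a : Fin (n + 1), |g ((a : ℕ) / n)| * (bernsteinPolynomial ℝ n a).eval t :=
        abs_sum_mul_eval_le _ ht
    _ ≤ ∑ a : Fin (n + 1), ε * (bernsteinPolynomial ℝ n a).eval t :=
        sum_le_sum fun a _ => mul_le_mul_of_nonneg_right (hg a) (bernsteinPolynomial.eval_nonneg _ ht)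
    _ = ε := by rw [← mul_sum, bernsteinPolynomial.sum_eval_s13, mul_one]

theorem abs_sub_le {g g' g'' : ℝ → ℝ} (hn : n ≠ 0) (hg : ∀ u, HasDerivAt g (g' u) u)
    (hg' : ∀ u, HasDerivAt g' (g'' u) u) {M : ℝ} (hM : ∀ u ∈ Set.Icc (0 : ℝ) 1, |g'' u| ≤ M)
    (ht : t ∈ Set.Icc (0 : ℝ) 1) : |g t - bernsteinOperator n g t| ≤ M / (8 * n) := by
  have hlin : g t - bernsteinOperator n g t = ∑ a : Fin (n + 1),
      (g t + g' t * ((a : ℕ) / n - t) - g ((a : ℕ) / n)) * (bernsteinPolynomial ℝ n a).eval t := by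
    have hsplit : ∑ a : Fin (n + 1), (g t + g' t * ((a : ℕ) / n - t) - g ((a : ℕ) / n))
          * (bernsteinPolynomial ℝ n a).eval t
        = g t * ∑ a : Fin (n + 1), (bernsteinPolynomial ℝ n a).eval t
          + g' t * ∑ a : Fin (n + 1), ((a : ℕ) / n - t) * (bernsteinPolynomial ℝ n a).eval t
          - bernsteinOperator n g t := by
      simp only [bernsteinOperator, mul_sum, ← sum_add_distrib, ← sum_sub_distrib]
      exact sum_congr rfl fun a _ => by ring
    rw [hsplit, bernsteinPolynomial.sum_eval_s13, bernsteinPolynomial.sum_sub_mul_eval hn]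
    ring
  have htaylor : ∀ a : Fin (n + 1), |g t + g' t * ((a : ℕ) / n - t) - g ((a : ℕ) / n)|
      ≤ M / 2 * ((a : ℕ) / n - t) ^ 2 := fun a => by
    rw [← abs_neg, show -(g t + g' t * ((a : ℕ) / n - t) - g ((a : ℕ) / n))
      = g ((a : ℕ) / n) - g t - g' t * ((a : ℕ) / n - t) by ring]
    exact abs_taylor_remainder_two_le hg hg' fun u hu =>
      hM u (Set.uIcc_subset_Icc ht (Fin.val_div_mem_Icc a) hu)
  have hM0 : 0 ≤ M := (abs_nonneg _).trans (hM t ht)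
  calc |g t - bernsteinOperator n g t|
      ≤ ∑ a : Fin (n + 1), M / 2 * ((a : ℕ) / n - t) ^ 2 * (bernsteinPolynomial ℝ n a).eval t := by
        rw [hlin]
        exact (abs_sum_mul_eval_le _ ht).trans (sum_le_sum fun a _ =>
          mul_le_mul_of_nonneg_right (htaylor a) (bernsteinPolynomial.eval_nonneg _ ht))
    _ = M / 2 * (t * (1 - t) / n) := by
        simp only [mul_assoc, ← mul_sum, bernsteinPolynomial.sum_sub_sq_mul_eval_s13 hn]
    _ ≤ M / 2 * (1 / 4 / n) := by
        gcongr
        nlinarith [sq_nonneg (t - 1 / 2)]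
    _ = M / (8 * n) := by ring

end bernsteinOperator

theorem Function.update_mem_Icc {ι α : Type*} [DecidableEq ι] [Preorder α] {a b y : ι → α}
    {i : ι} {u : α} (hy : y ∈ Set.Icc a b) (hu : u ∈ Set.Icc (a i) (b i)) :
    Function.update y i u ∈ Set.Icc a b :=
  ⟨le_update_iff.2 ⟨hu.1, fun j _ => hy.1 j⟩,
    update_le_iff.2 ⟨hu.2, fun j _ => hy.2 j⟩⟩

theorem HasLineDerivAt.hasDerivAt_update {ι E : Type*} [DecidableEq ι] [NormedAddCommGroup E]
    [NormedSpace ℝ E] {F : (ι → ℝ) → E} {F' : E} {y : ι → ℝ} {i : ι} {u : ℝ}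
    (h : HasLineDerivAt ℝ F F' (Function.update y i u) (Pi.single i 1)) :
    HasDerivAt (fun v => F (Function.update y i v)) F' u := by
  have hshift : (fun t : ℝ => F (Function.update y i u + t • Pi.single i 1))
      = fun t => F (Function.update y i (t + u)) := by
    ext t
    congr 1
    ext j
    rcases eq_or_ne j i with rfl | hj <;> simp [*, add_comm]
  have h0 : HasDerivAt (fun t : ℝ => F (Function.update y i (t + u))) F' (u - u) := by
    rw [sub_self, ← hshift]
    exact h
  simpa using h0.comp_sub_const u u

noncomputable def tensorBernsteinOperator {d : ℕ} (n : ℕ) (f : (Fin d → ℝ) → ℝ)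
    (x : Fin d → ℝ) : ℝ :=
  ∑ k : Fin d → Fin (n + 1),
    f (fun i => ((k i : ℕ) : ℝ) / n) * ∏ i, (bernsteinPolynomial ℝ n (k i)).eval (x i)

theorem Fin.cons_mem_Icc_zero_one {d : ℕ} {u : ℝ} {y : Fin d → ℝ} (hu : u ∈ Set.Icc 0 1)
    (hy : y ∈ Set.Icc 0 1) : (Fin.cons u y : Fin (d + 1) → ℝ) ∈ Set.Icc 0 1 :=
  ⟨fun i => Fin.cases hu.1 (fun j => hy.1 j) i, fun i => Fin.cases hu.2 (fun j => hy.2 j) i⟩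

namespace tensorBernsteinOperator

variable {n : ℕ}

theorem fin_zero (f : (Fin 0 → ℝ) → ℝ) (x : Fin 0 → ℝ) :
    tensorBernsteinOperator n f x = f x := by
  simp [tensorBernsteinOperator, Subsingleton.elim _ x]

theorem succ {d : ℕ} (f : (Fin (d + 1) → ℝ) → ℝ) (x : Fin (d + 1) → ℝ) :
    tensorBernsteinOperator n f x = bernsteinOperator n
      (fun u => tensorBernsteinOperator n (fun y => f (Fin.cons u y)) (Fin.tail x)) (x 0) := by
  simp only [tensorBernsteinOperator, bernsteinOperator, sum_mul]
  rw [← (Fin.consEquiv fun _ => Fin (n + 1)).sum_comp, Fintype.sum_prod_type]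
  refine sum_congr rfl fun a _ => sum_congr rfl fun k _ => ?_
  have hgrid : (fun i => ((Fin.cons (α := fun _ => Fin (n + 1)) a k i : Fin (n + 1)) : ℕ) / (n : ℝ))
      = Fin.cons ((a : ℕ) / (n : ℝ)) fun i => ((k i : ℕ) : ℝ) / n := by
    ext i
    cases i using Fin.cases <;> simp
  simp only [Fin.consEquiv, Equiv.coe_fn_mk, Fin.prod_univ_succ, Fin.cons_zero, Fin.cons_succ,
    Fin.tail, hgrid]
  ring

theorem abs_sub_le {d : ℕ} {f : (Fin d → ℝ) → ℝ} {ε : ℝ}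
    (hf : ∀ i, ∀ y ∈ Set.Icc (0 : Fin d → ℝ) 1,
      |f y - bernsteinOperator n (fun u => f (Function.update y i u)) (y i)| ≤ ε)
    {x : Fin d → ℝ} (hx : x ∈ Set.Icc 0 1) :
    |f x - tensorBernsteinOperator n f x| ≤ d * ε := by
  induction d with
  | zero => simp [fin_zero]
  | succ d ih =>
    have hx0 : x 0 ∈ Set.Icc (0 : ℝ) 1 := ⟨hx.1 0, hx.2 0⟩
    have hxt : Fin.tail x ∈ Set.Icc (0 : Fin d → ℝ) 1 := ⟨fun _ => hx.1 _, fun _ => hx.2 _⟩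
    have hline : (fun u => f (Function.update x 0 u)) = fun u => f (Fin.cons u (Fin.tail x)) := by
      ext u
      rw [← Fin.update_cons_zero (x 0), Fin.cons_self_tail]
    have hfirst := hf 0 x hx
    rw [hline] at hfirst
    have hrest : |bernsteinOperator n (fun u => f (Fin.cons u (Fin.tail x))) (x 0)
        - tensorBernsteinOperator n f x| ≤ d * ε := by
      rw [succ, bernsteinOperator.sub]
      refine bernsteinOperator.abs_le (fun a => ?_) hx0
      refine ih (f := fun y => f (Fin.cons ((a : ℕ) / n) y)) (fun i y hy => ?_) hxt
      simpa only [Fin.cons_update, Fin.cons_succ] using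
        hf i.succ _ (Fin.cons_mem_Icc_zero_one (Fin.val_div_mem_Icc a) hy)
    calc |f x - tensorBernsteinOperator n f x|
        ≤ |f x - bernsteinOperator n (fun u => f (Fin.cons u (Fin.tail x))) (x 0)|
          + |bernsteinOperator n (fun u => f (Fin.cons u (Fin.tail x))) (x 0)
            - tensorBernsteinOperator n f x| := _root_.abs_sub_le _ _ _
      _ ≤ ε + d * ε := add_le_add hfirst hrest
      _ = (d + 1 : ℕ) * ε := by push_cast; ring

end tensorBernsteinOperator

theorem tensor_bernstein_C2_general (d n : ℕ) (hn : 0 < n)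
    (f : (Fin d → ℝ) → ℝ)
    (g1 : Fin d → (Fin d → ℝ) → ℝ)
    (g2 : Fin d → Fin d → (Fin d → ℝ) → ℝ)
    (hf1 : ∀ (i : Fin d) (x : Fin d → ℝ), HasLineDerivAt ℝ f (g1 i x) x (Pi.single i 1))
    (hf2 : ∀ (i j : Fin d) (x : Fin d → ℝ),
      HasLineDerivAt ℝ (g1 i) (g2 i j x) x (Pi.single j 1))
    (M : ℝ) (hM : ∀ (i j : Fin d), ∀ x ∈ Set.Icc (0 : Fin d → ℝ) 1, |g2 i j x| ≤ M) :
    ∀ x ∈ Set.Icc (0 : Fin d → ℝ) 1,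
      |f x - ∑ k : Fin d → Fin (n+1),
          f (fun i => ((k i : ℕ) : ℝ)/n) *
            ∏ i, ((n.choose (k i) : ℝ) * (x i) ^ (k i : ℕ) * (1 - x i) ^ (n - (k i : ℕ)))|
        ≤ (d:ℝ)/(8*(n:ℝ)) * M := by
  intro x hx
  have hline : ∀ i, ∀ y ∈ Set.Icc (0 : Fin d → ℝ) 1,
      |f y - bernsteinOperator n (fun u => f (Function.update y i u)) (y i)| ≤ M / (8 * n) := by
    intro i y hy
    simpa only [Function.update_eq_self] using bernsteinOperator.abs_sub_le hn.ne' (fun u => (hf1 i _).hasDerivAt_update)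
      (fun u => (hf2 i i _).hasDerivAt_update)
      (fun u hu => hM i i _ (Function.update_mem_Icc hy hu)) ⟨hy.1 i, hy.2 i⟩
  rw [show (d : ℝ) / (8 * n) * M = d * (M / (8 * n)) by ring]
  convert tensorBernsteinOperator.abs_sub_le hline hx using 3
  simp [tensorBernsteinOperator, bernsteinPolynomial]

/-- tensor product Bernstein approximation of a C² function on [0,1]^d:
error ≤ (d/(8n)) |f|_{2,∞}, where |f|_{2,∞} bounds all second order partial derivatives. -/
theorem tensor_bernstein_C2 (d n : ℕ) (hd : 1 ≤ d) (hn : 0 < n)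
    (f : (Fin d → ℝ) → ℝ)
    (g1 : Fin d → (Fin d → ℝ) → ℝ)
    (g2 : Fin d → Fin d → (Fin d → ℝ) → ℝ)
    (hf1 : ∀ (i : Fin d) (x : Fin d → ℝ), HasLineDerivAt ℝ f (g1 i x) x (Pi.single i 1))
    (hf2 : ∀ (i j : Fin d) (x : Fin d → ℝ),
      HasLineDerivAt ℝ (g1 i) (g2 i j x) x (Pi.single j 1))
    (hfc : ContinuousOn f (Set.Icc (0 : Fin d → ℝ) 1))
    (hg1c : ∀ i, ContinuousOn (g1 i) (Set.Icc (0 : Fin d → ℝ) 1))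
    (hg2c : ∀ i j, ContinuousOn (g2 i j) (Set.Icc (0 : Fin d → ℝ) 1))
    (M : ℝ) (hM : ∀ (i j : Fin d), ∀ x ∈ Set.Icc (0 : Fin d → ℝ) 1, |g2 i j x| ≤ M) :
    ∀ x ∈ Set.Icc (0 : Fin d → ℝ) 1,
      |f x - ∑ k : Fin d → Fin (n+1),
          f (fun i => ((k i : ℕ) : ℝ)/n) *
            ∏ i, ((n.choose (k i) : ℝ) * (x i) ^ (k i : ℕ) * (1 - x i) ^ (n - (k i : ℕ)))|
        ≤ (d:ℝ)/(8*(n:ℝ)) * M :=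
  tensor_bernstein_C2_general d n hn f g1 g2 hf1 hf2 M hM
end

section
/- If the outer function g in the Kolmogorov representation of f ∈ C([0,1]^d) is L-Lipschitz on [0,d], and KB(f)_n is obtained by replacing g with its piecewise linear interpolant on the uniform partition of [0,d] with mesh 1/n, then ‖f − KB(f)_n‖_∞ ≤ (2d+1)L/n. -/
set_option maxHeartbeats 1000000 in
/-- KB-spline approximation bounded by (2d+1)L/n for L-Lipschitz outer g. -/
theorem KB_approx_lipschitz (d n : ℕ) (hd : 1 ≤ d) (hn : 0 < n)
    (lam : Fin d → ℝ) (hlam : ∀ i, 0 < lam i ∧ lam i ≤ 1)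
    (φ : Fin (2*d+1) → ℝ → ℝ)
    (hφc : ∀ q, ContinuousOn (φ q) (Set.Icc (0:ℝ) 1))
    (hφmap : ∀ q, Set.MapsTo (φ q) (Set.Icc (0:ℝ) 1) (Set.Icc (0:ℝ) 1))
    (g : ℝ → ℝ) (K : ℝ) (hK : 0 ≤ K)
    (hg : ∀ s ∈ Set.Icc (0:ℝ) (d:ℝ), ∀ t ∈ Set.Icc (0:ℝ) (d:ℝ),
      |g s - g t| ≤ K * |s - t|)
    (f : (Fin d → ℝ) → ℝ)
    (hf : ∀ x ∈ Set.Icc (0 : Fin d → ℝ) 1,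
      f x = ∑ q : Fin (2*d+1), g (∑ i, lam i * φ q (x i)))
    (L : ℝ → ℝ) (hLc : ContinuousOn L (Set.Icc (0:ℝ) (d:ℝ)))
    (hLI : ∀ j : ℕ, j ≤ d*n → L ((j:ℝ)/n) = g ((j:ℝ)/n))
    (hLaff : ∀ j : ℕ, j < d*n → ∃ a b : ℝ,
      ∀ t ∈ Set.Icc ((j:ℝ)/n) (((j:ℝ)+1)/n), L t = a * t + b) :
    ∀ x ∈ Set.Icc (0 : Fin d → ℝ) 1,
      |f x - ∑ q : Fin (2*d+1), L (∑ i, lam i * φ q (x i))|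
        ≤ (2*(d:ℝ)+1) * K / n := by
  have hn' : (0:ℝ) < n := by exact_mod_cast hn
  have hd' : (1:ℝ) ≤ d := by exact_mod_cast hd
  have hdn : 1 ≤ d * n := Nat.one_le_iff_ne_zero.mpr (by positivity)
  -- pointwise bound |g s - L s| ≤ K/n on [0,d]
  have key : ∀ s ∈ Set.Icc (0:ℝ) (d:ℝ), |g s - L s| ≤ K / n := by
    intro s hs
    obtain ⟨hs0, hsd⟩ := hs
    set j : ℕ := min ⌊s * n⌋₊ (d*n - 1) with hj
    have hjlt : j < d * n := lt_of_le_of_lt (min_le_right _ _) (by omega)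
    have hsn0 : 0 ≤ s * n := by positivity
    have hju : (j:ℝ) ≤ s * n := by
      rcases le_or_gt ⌊s*n⌋₊ (d*n-1) with h | h
      · rw [hj, min_eq_left h]; exact Nat.floor_le hsn0
      · rw [hj, min_eq_right h.le]
        calc ((d*n - 1 : ℕ):ℝ) ≤ (⌊s*n⌋₊:ℝ) := by exact_mod_cast h.le
          _ ≤ s*n := Nat.floor_le hsn0
    have hjv : s * n ≤ (j:ℝ) + 1 := by
      rcases le_or_gt ⌊s*n⌋₊ (d*n-1) with h | h
      · rw [hj, min_eq_left h]; exact (Nat.lt_floor_add_one _).le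
      · rw [hj, min_eq_right h.le]
        have h1 : s * n ≤ (d:ℝ) * n := by nlinarith
        have h2 : ((d*n-1:ℕ):ℝ) + 1 = (d:ℝ) * n := by
          push_cast [Nat.cast_sub hdn]; ring
        linarith
    set u : ℝ := (j:ℝ)/n with hu
    set v : ℝ := ((j:ℝ)+1)/n with hv
    have hus : u ≤ s := by rw [hu, div_le_iff₀ hn']; linarith
    have hsv : s ≤ v := by rw [hv, le_div_iff₀ hn']; linarith
    have hu0 : 0 ≤ u := by positivity
    have hvd : v ≤ (d:ℝ) := by
      rw [hv, div_le_iff₀ hn']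
      have : (j:ℝ) + 1 ≤ (d*n:ℕ) := by exact_mod_cast hjlt
      push_cast at this; linarith
    obtain ⟨a, b, hab⟩ := hLaff j hjlt
    have hLu : L u = g u := hLI j hjlt.le
    have hLv : L v = g v := by
      have := hLI (j+1) (by omega)
      push_cast at this
      rw [hv]; exact this
    have hLs : L s = a * s + b := hab s ⟨hus, hsv⟩
    have hLu' : L u = a * u + b := hab u ⟨le_refl _, le_trans hus hsv⟩
    have hLv' : L v = a * v + b := hab v ⟨le_trans hus hsv, le_refl _⟩
    set θ : ℝ := (s - u) * n with hθ
    have hθ0 : 0 ≤ θ := by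
      apply mul_nonneg (by linarith) hn'.le
    have hθ1 : θ ≤ 1 := by
      have huv : (s - u) * n = s * n - (j:ℝ) := by
        rw [hu]; field_simp
      rw [hθ, huv]; linarith
    have hsu : s - u = θ / n := by rw [hθ]; field_simp
    have hvs : v - s = (1 - θ) / n := by
      rw [hθ, hv, hu]; field_simp; ring
    have hseq : s = (1 - θ) * u + θ * v := by
      rw [hθ, hu, hv]
      field_simp
      ring
    have hcomb : L s = (1 - θ) * g u + θ * g v := by
      rw [hLs, ← hLu, ← hLv, hLu', hLv']
      linear_combination a * hseq
    have hgu : |g s - g u| ≤ K * (s - u) := by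
      have := hg s ⟨hs0, hsd⟩ u ⟨hu0, le_trans hus hsd⟩
      rwa [abs_of_nonneg (show (0:ℝ) ≤ s - u by linarith)] at this
    have hgv : |g s - g v| ≤ K * (v - s) := by
      have := hg s ⟨hs0, hsd⟩ v ⟨by positivity, hvd⟩
      rwa [abs_of_nonpos (show s - v ≤ (0:ℝ) by linarith), neg_sub] at this
    have hdecomp : g s - L s = (1 - θ) * (g s - g u) + θ * (g s - g v) := by
      rw [hcomb]; ring
    rw [hdecomp]
    calc |(1 - θ) * (g s - g u) + θ * (g s - g v)|
        ≤ |(1 - θ) * (g s - g u)| + |θ * (g s - g v)| := abs_add_le _ _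
      _ = (1 - θ) * |g s - g u| + θ * |g s - g v| := by
          rw [abs_mul, abs_mul, abs_of_nonneg (by linarith : (0:ℝ) ≤ 1 - θ),
            abs_of_nonneg hθ0]
      _ ≤ (1 - θ) * (K * (s - u)) + θ * (K * (v - s)) := by
          apply add_le_add
          · exact mul_le_mul_of_nonneg_left hgu (by linarith)
          · exact mul_le_mul_of_nonneg_left hgv hθ0
      _ ≤ K / n := by
          rw [hsu, hvs]
          have h2 : (1 - θ) * (K * (θ / n)) + θ * (K * ((1 - θ) / n))
              = (2 * θ * (1 - θ) * K) / n := by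
            field_simp
            ring
          rw [h2, div_le_div_iff₀ hn' hn']
          nlinarith [sq_nonneg (2*θ - 1), mul_nonneg hK hn'.le,
            mul_nonneg (mul_nonneg hK hn'.le) (sq_nonneg (2*θ - 1))]
  -- now the sum
  intro x hx
  have hxmem : ∀ i, x i ∈ Set.Icc (0:ℝ) 1 := by
    intro i
    exact ⟨hx.1 i, hx.2 i⟩
  have hsq : ∀ q : Fin (2*d+1), (∑ i, lam i * φ q (x i)) ∈ Set.Icc (0:ℝ) (d:ℝ) := by
    intro q
    constructor
    · apply Finset.sum_nonneg
      intro i _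
      have hφ := hφmap q (hxmem i)
      exact mul_nonneg (hlam i).1.le hφ.1
    · calc ∑ i, lam i * φ q (x i) ≤ ∑ _i : Fin d, (1:ℝ) := by
            apply Finset.sum_le_sum
            intro i _
            have hφ := hφmap q (hxmem i)
            nlinarith [(hlam i).1, (hlam i).2, hφ.1, hφ.2]
        _ = (d:ℝ) := by simp
  rw [hf x hx, ← Finset.sum_sub_distrib]
  calc |∑ q : Fin (2*d+1), (g (∑ i, lam i * φ q (x i)) - L (∑ i, lam i * φ q (x i)))|
      ≤ ∑ q : Fin (2*d+1), |g (∑ i, lam i * φ q (x i)) - L (∑ i, lam i * φ q (x i))| :=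
        Finset.abs_sum_le_sum_abs _ _
    _ ≤ ∑ _q : Fin (2*d+1), K / n := by
        apply Finset.sum_le_sum
        intro q _
        exact key _ (hsq q)
    _ = (2*(d:ℝ)+1) * K / n := by
        rw [Finset.sum_const, Finset.card_univ, Fintype.card_fin]
        push_cast
        ring
end

section
/- Let g : [0,d] → ℝ be β-Hölder with constant C (0 < β ≤ 1) and let L_g be its piecewise linear interpolant on the uniform partition with mesh 1/n. If f has Kolmogorov representation with outer function g and KB(f)_n is the corresponding approximant, then ‖f − KB(f)_n‖_∞ ≤ (2d+1) C / n^β. -/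
lemma interp_err (d n : ℕ) (hd : 1 ≤ d) (hn : 0 < n)
    (β : ℝ) (hβ0 : 0 < β) (C : ℝ) (hC : 0 ≤ C)
    (g L : ℝ → ℝ)
    (hg : ∀ s ∈ Set.Icc (0:ℝ) (d:ℝ), ∀ t ∈ Set.Icc (0:ℝ) (d:ℝ),
      |g s - g t| ≤ C * |s - t| ^ β)
    (hLI : ∀ j : ℕ, j ≤ d*n → L ((j:ℝ)/n) = g ((j:ℝ)/n))
    (hLaff : ∀ j : ℕ, j < d*n → ∃ a b : ℝ,
      ∀ t ∈ Set.Icc ((j:ℝ)/n) (((j:ℝ)+1)/n), L t = a * t + b) :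
    ∀ s ∈ Set.Icc (0:ℝ) (d:ℝ), |g s - L s| ≤ C / (n:ℝ) ^ β := by
  intro s hs
  have hn' : (0:ℝ) < n := by exact_mod_cast hn
  have hdn : 1 ≤ d * n := Nat.one_le_iff_ne_zero.mpr (by positivity)
  set m : ℕ := (⌊s * n⌋).toNat with hm
  set j : ℕ := min m (d*n - 1) with hjdef
  have hj : j < d*n := lt_of_le_of_lt (min_le_right _ _) (by omega)
  have hsn0 : 0 ≤ s * n := mul_nonneg hs.1 hn'.le
  have hmr : (m:ℝ) = ((⌊s * n⌋ : ℤ) : ℝ) := by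
    rw [hm]; exact_mod_cast Int.toNat_of_nonneg (Int.floor_nonneg.mpr hsn0)
  have hmle : (m:ℝ) ≤ s * n := by rw [hmr]; exact Int.floor_le _
  have hjl : (j:ℝ)/n ≤ s := by
    rw [div_le_iff₀ hn']
    calc (j:ℝ) ≤ m := by exact_mod_cast min_le_left m _
    _ ≤ s * n := hmle
  have hju : s ≤ ((j:ℝ)+1)/n := by
    rw [le_div_iff₀ hn']
    by_cases h : m ≤ d*n - 1
    · have hjm : j = m := min_eq_left h
      have h1 : s * n < (⌊s * n⌋ : ℝ) + 1 := Int.lt_floor_add_one _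
      rw [hjm, hmr]
      linarith
    · have hjm : j = d*n - 1 := min_eq_right (by omega)
      have hsd : s ≤ (d:ℝ) := hs.2
      have h2 : ((j:ℝ)+1) = ((d*n : ℕ) : ℝ) := by
        rw [hjm]; push_cast [Nat.cast_sub hdn]; ring
      rw [h2]; push_cast
      nlinarith
  obtain ⟨a, b, hab⟩ := hLaff j hj
  have hstep : (j:ℝ)/n ≤ ((j:ℝ)+1)/n := by gcongr; linarith
  -- endpoints
  have hL0 : L ((j:ℝ)/n) = a * ((j:ℝ)/n) + b := hab _ ⟨le_refl _, hstep⟩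
  have hL1 : L (((j:ℝ)+1)/n) = a * (((j:ℝ)+1)/n) + b := hab _ ⟨hstep, le_refl _⟩
  have hLs : L s = a * s + b := hab s ⟨hjl, hju⟩
  have hg0 : L ((j:ℝ)/n) = g ((j:ℝ)/n) := hLI j hj.le
  have hg1 : L (((j:ℝ)+1)/n) = g (((j:ℝ)+1)/n) := by
    have := hLI (j+1) hj
    push_cast at this
    exact this
  set θ : ℝ := (s - (j:ℝ)/n) * n with hθ
  have hθ0 : 0 ≤ θ := mul_nonneg (by linarith) hn'.le
  have hjl' : (j:ℝ) ≤ s * n := by rw [div_le_iff₀ hn'] at hjl; linarith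
  have hju' : s * n ≤ (j:ℝ) + 1 := by rw [le_div_iff₀ hn'] at hju; linarith
  have eθ : θ = s * n - (j:ℝ) := by rw [hθ]; field_simp
  have hθ1 : θ ≤ 1 := by rw [eθ]; linarith
  -- convex combination
  have hcomb : L s = (1-θ) * g ((j:ℝ)/n) + θ * g (((j:ℝ)+1)/n) := by
    rw [← hg0, ← hg1, hL0, hL1, hLs, hθ]
    field_simp
    ring
  -- membership of endpoints in [0,d]
  have hj0 : (j:ℝ)/n ∈ Set.Icc (0:ℝ) (d:ℝ) := by
    constructor
    · positivity
    · rw [div_le_iff₀ hn']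
      have : (j:ℝ) ≤ (d:ℝ)*n := by exact_mod_cast hj.le
      linarith
  have hj1 : ((j:ℝ)+1)/n ∈ Set.Icc (0:ℝ) (d:ℝ) := by
    constructor
    · positivity
    · rw [div_le_iff₀ hn']
      have : ((j:ℝ)+1) ≤ (d:ℝ)*n := by exact_mod_cast hj
      linarith
  -- Hölder bounds
  have hnb : (0:ℝ) < (n:ℝ)^β := Real.rpow_pos_of_pos hn' β
  have hpow : ∀ t : ℝ, |s - t| ≤ 1/n → C * |s - t| ^ β ≤ C / (n:ℝ)^β := by
    intro t ht
    have h1 : |s - t| ^ β ≤ (1/n) ^ β :=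
      Real.rpow_le_rpow (abs_nonneg _) ht hβ0.le
    have h2 : (1/(n:ℝ)) ^ β = 1 / (n:ℝ)^β := by
      rw [Real.div_rpow zero_le_one hn'.le, Real.one_rpow]
    calc C * |s - t| ^ β ≤ C * (1/(n:ℝ)^β) := by rw [← h2]; nlinarith
    _ = C / (n:ℝ)^β := by ring
  have e0 : (s - (j:ℝ)/n) * n = s * n - (j:ℝ) := by field_simp
  have e1 : (s - ((j:ℝ)+1)/n) * n = s * n - ((j:ℝ)+1) := by field_simp
  have hd0 : |s - (j:ℝ)/n| ≤ 1/n := by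
    rw [abs_of_nonneg (by linarith), le_div_iff₀ hn']
    linarith [e0]
  have hd1 : |s - ((j:ℝ)+1)/n| ≤ 1/n := by
    rw [abs_of_nonpos (by linarith), le_div_iff₀ hn']
    linarith [e1]
  have hb0 : |g s - g ((j:ℝ)/n)| ≤ C / (n:ℝ)^β :=
    le_trans (hg s hs _ hj0) (hpow _ hd0)
  have hb1 : |g s - g (((j:ℝ)+1)/n)| ≤ C / (n:ℝ)^β :=
    le_trans (hg s hs _ hj1) (hpow _ hd1)
  have key : g s - L s = (1-θ) * (g s - g ((j:ℝ)/n)) + θ * (g s - g (((j:ℝ)+1)/n)) := by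
    rw [hcomb]; ring
  rw [key]
  calc |(1-θ) * (g s - g ((j:ℝ)/n)) + θ * (g s - g (((j:ℝ)+1)/n))|
      ≤ |(1-θ) * (g s - g ((j:ℝ)/n))| + |θ * (g s - g (((j:ℝ)+1)/n))| := abs_add_le _ _
    _ = (1-θ) * |g s - g ((j:ℝ)/n)| + θ * |g s - g (((j:ℝ)+1)/n)| := by
        rw [abs_mul, abs_mul, abs_of_nonneg (by linarith), abs_of_nonneg hθ0]
    _ ≤ (1-θ) * (C / (n:ℝ)^β) + θ * (C / (n:ℝ)^β) := by
        apply add_le_add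
        · exact mul_le_mul_of_nonneg_left hb0 (by linarith)
        · exact mul_le_mul_of_nonneg_left hb1 hθ0
    _ = C / (n:ℝ)^β := by ring

/-- KB-spline approximation bounded by (2d+1)C/n^β for β-Hölder outer g. -/
theorem KB_approx_holder (d n : ℕ) (hd : 1 ≤ d) (hn : 0 < n)
    (lam : Fin d → ℝ) (hlam : ∀ i, 0 < lam i ∧ lam i ≤ 1)
    (φ : Fin (2*d+1) → ℝ → ℝ)
    (hφc : ∀ q, ContinuousOn (φ q) (Set.Icc (0:ℝ) 1))
    (hφmap : ∀ q, Set.MapsTo (φ q) (Set.Icc (0:ℝ) 1) (Set.Icc (0:ℝ) 1))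
    (β : ℝ) (hβ : β ∈ Set.Ioc (0:ℝ) 1)
    (g : ℝ → ℝ) (C : ℝ) (hC : 0 ≤ C)
    (hg : ∀ s ∈ Set.Icc (0:ℝ) (d:ℝ), ∀ t ∈ Set.Icc (0:ℝ) (d:ℝ),
      |g s - g t| ≤ C * |s - t| ^ β)
    (f : (Fin d → ℝ) → ℝ)
    (hf : ∀ x ∈ Set.Icc (0 : Fin d → ℝ) 1,
      f x = ∑ q : Fin (2*d+1), g (∑ i, lam i * φ q (x i)))
    (L : ℝ → ℝ) (hLc : ContinuousOn L (Set.Icc (0:ℝ) (d:ℝ)))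
    (hLI : ∀ j : ℕ, j ≤ d*n → L ((j:ℝ)/n) = g ((j:ℝ)/n))
    (hLaff : ∀ j : ℕ, j < d*n → ∃ a b : ℝ,
      ∀ t ∈ Set.Icc ((j:ℝ)/n) (((j:ℝ)+1)/n), L t = a * t + b) :
    ∀ x ∈ Set.Icc (0 : Fin d → ℝ) 1,
      |f x - ∑ q : Fin (2*d+1), L (∑ i, lam i * φ q (x i))|
        ≤ (2*(d:ℝ)+1) * C / (n:ℝ) ^ β := by
  intro x hx
  have herr := interp_err d n hd hn β hβ.1 C hC g L hg hLI hLaff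
  have hxmem : ∀ i, x i ∈ Set.Icc (0:ℝ) 1 := fun i => ⟨hx.1 i, hx.2 i⟩
  have hsq : ∀ q : Fin (2*d+1), (∑ i, lam i * φ q (x i)) ∈ Set.Icc (0:ℝ) (d:ℝ) := by
    intro q
    constructor
    · apply Finset.sum_nonneg
      intro i _
      exact mul_nonneg (hlam i).1.le (hφmap q (hxmem i)).1
    · calc (∑ i, lam i * φ q (x i)) ≤ ∑ _i : Fin d, (1:ℝ) := by
            apply Finset.sum_le_sum
            intro i _
            have h1 := (hφmap q (hxmem i)).2
            have h2 := (hφmap q (hxmem i)).1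
            have := (hlam i).2
            nlinarith [(hlam i).1]
        _ = (d:ℝ) := by simp
  rw [hf x hx, ← Finset.sum_sub_distrib]
  calc |∑ q : Fin (2*d+1), (g (∑ i, lam i * φ q (x i)) - L (∑ i, lam i * φ q (x i)))|
      ≤ ∑ q : Fin (2*d+1), |g (∑ i, lam i * φ q (x i)) - L (∑ i, lam i * φ q (x i))| :=
        Finset.abs_sum_le_sum_abs _ _
    _ ≤ ∑ _q : Fin (2*d+1), C / (n:ℝ)^β := by
        apply Finset.sum_le_sum
        intro q _
        exact herr _ (hsq q)
    _ = (2*(d:ℝ)+1) * C / (n:ℝ)^β := by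
        rw [Finset.sum_const, Finset.card_univ, Fintype.card_fin]
        push_cast
        ring
end
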